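/- Let N, K ≥ 1, let f_1,…,f_N : ℝ^n → ℝ, g_1,…,g_m : ℝ^n → ℝ, let Ω ⊆ ℝ^n, let κ be a natural number, and let 𝓔_1,…,𝓔_K ⊆ {1,…,N} be the hyperedges of a connected hypergraph on {1,…,N}. Then the infimum of ∑_{i=1}^N f_i(x) over the set {x ∈ ℝ^n : g_h(x) ≤ 0 for all h, x ∈ Ω, ‖x‖₀ ≤ κ} equals the infimum of ∑_{i=1}^N f_i(x_i) over the set of tuples (x_1,…,x_N, y_1,…,y_K) ∈ (ℝ^n)^N × (ℝ^n)^K such that g_h(x_i) ≤ 0 for all i and h, x_i ∈ Ω for all i, x_i = y_j for every j and every i ∈ 𝓔_j, and ‖y_j‖₀ ≤ κ for all j. -/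

import Mathlib

/-!
Along a hyperedge path the consensus constraints `x i = y j` (for `i ∈ E j`) propagate from one
hyperedge to the next through a common node, so on a connected hypergraph every feasible tuple
of the consensus problem is constant. Hence both problems range over the same objective values.
-/

section Hypergraph

variable {ι κ α : Type*}

def HypergraphConnected (E : κ → Set ι) : Prop :=
  ∀ i i' : ι, ∃ (k : ℕ) (p : Fin (k + 1) → κ),
    i ∈ E (p 0) ∧ i' ∈ E (p (Fin.last k)) ∧
    ∀ l : Fin k, (E (p l.castSucc) ∩ E (p l.succ)).Nonempty

theorem consensus_eq_along_path {E : κ → Set ι} {x : ι → α} {y : κ → α}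
    (hxy : ∀ j, ∀ i ∈ E j, x i = y j) {k : ℕ} {p : Fin (k + 1) → κ}
    (hstep : ∀ l : Fin k, (E (p l.castSucc) ∩ E (p l.succ)).Nonempty) (l : Fin (k + 1)) :
    y (p l) = y (p 0) := by
  induction l using Fin.induction with
  | zero => rfl
  | succ l ih =>
    obtain ⟨i, hi, hi'⟩ := hstep l
    rw [← hxy _ i hi', hxy _ i hi, ih]

theorem HypergraphConnected.consensus_eq {E : κ → Set ι} (hE : HypergraphConnected E)
    {x : ι → α} {y : κ → α} (hxy : ∀ j, ∀ i ∈ E j, x i = y j) (i i' : ι) : x i = x i' := by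
  obtain ⟨k, p, hi, hi', hstep⟩ := hE i i'
  rw [hxy _ i hi, hxy _ i' hi', consensus_eq_along_path hxy hstep (Fin.last k)]

theorem HypergraphConnected.exists_mem {E : κ → Set ι} (hE : HypergraphConnected E) (i : ι) :
    ∃ j, i ∈ E j :=
  let ⟨_, p, hi, _⟩ := hE i i
  ⟨p 0, hi⟩

end Hypergraph

theorem stmt_1_general (n N K m : ℕ) (hN : 1 ≤ N)
    (f : Fin N → EuclideanSpace ℝ (Fin n) → ℝ)
    (g : Fin m → EuclideanSpace ℝ (Fin n) → ℝ)
    (Ω : Set (EuclideanSpace ℝ (Fin n))) (κ : ℕ)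
    (E : Fin K → Set (Fin N))
    (hconn : ∀ i i' : Fin N, ∃ (k : ℕ) (p : Fin (k + 1) → Fin K),
      i ∈ E (p 0) ∧ i' ∈ E (p (Fin.last k)) ∧
      ∀ l : Fin k, (E (p l.castSucc) ∩ E (p l.succ)).Nonempty) :
    sInf ((fun x : EuclideanSpace ℝ (Fin n) => ((∑ i, f i x : ℝ) : EReal)) ''
        {x | (∀ h, g h x ≤ 0) ∧ x ∈ Ω ∧ Set.ncard {t : Fin n | x t ≠ 0} ≤ κ}) =
      sInf ((fun p : (Fin N → EuclideanSpace ℝ (Fin n)) × (Fin K → EuclideanSpace ℝ (Fin n)) =>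
          ((∑ i, f i (p.1 i) : ℝ) : EReal)) ''
        {p | (∀ i h, g h (p.1 i) ≤ 0) ∧ (∀ i, p.1 i ∈ Ω) ∧
          (∀ j, ∀ i ∈ E j, p.1 i = p.2 j) ∧
          (∀ j, Set.ncard {t : Fin n | p.2 j t ≠ 0} ≤ κ)}) := by
  have hE : HypergraphConnected E := hconn
  congr 1
  ext v
  constructor
  · rintro ⟨x, ⟨hg, hΩ, hκ⟩, rfl⟩
    exact ⟨(fun _ => x, fun _ => x), ⟨fun _ => hg, fun _ => hΩ, fun _ _ _ => rfl, fun _ => hκ⟩, rfl⟩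
  · rintro ⟨p, ⟨hg, hΩ, hxy, hκ⟩, rfl⟩
    let i₀ : Fin N := ⟨0, hN⟩
    obtain ⟨j₀, hj₀⟩ := hE.exists_mem i₀
    refine ⟨p.1 i₀, ⟨hg i₀, hΩ i₀, hxy j₀ i₀ hj₀ ▸ hκ j₀⟩, ?_⟩
    exact congrArg _ (Finset.sum_congr rfl fun i _ => by rw [hE.consensus_eq hxy i₀ i])

/-- The SCP problem and its distributed consensus reformulation over a connected
hypergraph have the same optimal value. -/
theorem stmt_1 (n N K m : ℕ) (hN : 1 ≤ N) (hK : 1 ≤ K)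
    (f : Fin N → EuclideanSpace ℝ (Fin n) → ℝ)
    (g : Fin m → EuclideanSpace ℝ (Fin n) → ℝ)
    (Ω : Set (EuclideanSpace ℝ (Fin n))) (κ : ℕ)
    (E : Fin K → Set (Fin N))
    (hconn : ∀ i i' : Fin N, ∃ (k : ℕ) (p : Fin (k + 1) → Fin K),
      i ∈ E (p 0) ∧ i' ∈ E (p (Fin.last k)) ∧
      ∀ l : Fin k, (E (p l.castSucc) ∩ E (p l.succ)).Nonempty) :
    sInf ((fun x : EuclideanSpace ℝ (Fin n) => ((∑ i, f i x : ℝ) : EReal)) ''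
        {x | (∀ h, g h x ≤ 0) ∧ x ∈ Ω ∧ Set.ncard {t : Fin n | x t ≠ 0} ≤ κ}) =
      sInf ((fun p : (Fin N → EuclideanSpace ℝ (Fin n)) × (Fin K → EuclideanSpace ℝ (Fin n)) =>
          ((∑ i, f i (p.1 i) : ℝ) : EReal)) ''
        {p | (∀ i h, g h (p.1 i) ≤ 0) ∧ (∀ i, p.1 i ∈ Ω) ∧
          (∀ j, ∀ i ∈ E j, p.1 i = p.2 j) ∧
          (∀ j, Set.ncard {t : Fin n | p.2 j t ≠ 0} ≤ κ)}) :=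
  stmt_1_general n N K m hN f g Ω κ E hconn
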